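/- arXiv:1904.13019 — 3 statements merged into one kernel-verified Lean document; each statement's English description precedes it below -/
import Mathlib

section
/- Let $x$ be a binomial random variable with $n$ trials and success probability $p$, and let $d$ be a positive integer. Then $\mathbb{E}\left[\frac{x!}{(x+d)!}\right] \leq \frac{n!}{(n+d)! \, p^d}$. -/
/-!
Since `C(n, i) · i! / (i + d)! = n! / (n + d)! · C(n + d, i + d)`, multiplying the `i`-th term of
the expectation by `(n + d)! p^d / n!` gives the probability that `B(n + d, p)` takes the value
`i + d`; these probabilities sum to at most one.
-/

open Finset Nat

theorem Nat.choose_mul_factorial_div_factorial_add {K : Type*} [Field K] [CharZero K]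
    {n i : ℕ} (d : ℕ) (hi : i ≤ n) :
    (n.choose i : K) * (i ! / (i + d)!) = n ! / (n + d)! * ((n + d).choose (i + d) : K) := by
  have hsmall := Nat.choose_mul_factorial_mul_factorial hi
  have hlarge := Nat.choose_mul_factorial_mul_factorial (Nat.add_le_add_right hi d)
  rw [Nat.add_sub_add_right] at hlarge
  have hnat : n.choose i * i ! * (n + d)! = n ! * ((n + d).choose (i + d) * (i + d)!) := by
    apply Nat.eq_of_mul_eq_mul_right (Nat.factorial_pos (n - i))
    calc n.choose i * i ! * (n + d)! * (n - i)!
        = n.choose i * i ! * (n - i)! * (n + d)! := by ring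
      _ = n ! * ((n + d).choose (i + d) * (i + d)! * (n - i)!) := by rw [hsmall, hlarge]
      _ = n ! * ((n + d).choose (i + d) * (i + d)!) * (n - i)! := by ring
  have hcast : (n.choose i : K) * i ! * (n + d)! = n ! * ((n + d).choose (i + d) * (i + d)!) := by
    exact_mod_cast hnat
  rw [mul_div_assoc', div_mul_eq_mul_div, div_eq_div_iff (by simp [factorial_ne_zero])
    (by simp [factorial_ne_zero])]
  linear_combination hcast

theorem sum_binomial_le_one_of_subset {p : ℝ} (hp0 : 0 ≤ p) (hp1 : p ≤ 1) {N : ℕ}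
    {s : Finset ℕ} (hs : s ⊆ range (N + 1)) :
    ∑ j ∈ s, (N.choose j : ℝ) * p ^ j * (1 - p) ^ (N - j) ≤ 1 := by
  have hsum_eq_one : ∑ j ∈ range (N + 1), (N.choose j : ℝ) * p ^ j * (1 - p) ^ (N - j) = 1 := by
    have hbinomial := add_pow p (1 - p) N
    rw [add_sub_cancel, one_pow] at hbinomial
    exact (sum_congr rfl fun j _ => by ring).trans hbinomial.symm
  calc ∑ j ∈ s, (N.choose j : ℝ) * p ^ j * (1 - p) ^ (N - j)
      ≤ ∑ j ∈ range (N + 1), (N.choose j : ℝ) * p ^ j * (1 - p) ^ (N - j) := by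
        refine sum_le_sum_of_subset_of_nonneg hs fun j _ _ => ?_
        have : 0 ≤ 1 - p := sub_nonneg.mpr hp1
        positivity
    _ = 1 := hsum_eq_one

theorem binomial_term_mul_factorial_div_factorial_add {p : ℝ} (hp : p ≠ 0) {n i : ℕ} (d : ℕ)
    (hi : i ≤ n) :
    (n.choose i : ℝ) * p ^ i * (1 - p) ^ (n - i) * (i ! / (i + d)!)
      = n ! / ((n + d)! * p ^ d) *
        ((n + d).choose (i + d) * p ^ (i + d) * (1 - p) ^ (n + d - (i + d))) := by
  calc (n.choose i : ℝ) * p ^ i * (1 - p) ^ (n - i) * (i ! / (i + d)!)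
      = p ^ i * (1 - p) ^ (n - i) * ((n.choose i : ℝ) * (i ! / (i + d)!)) := by ring
    _ = _ := by
      rw [Nat.choose_mul_factorial_div_factorial_add d hi, Nat.add_sub_add_right]
      field_simp
      ring

theorem binomial_factorial_ratio_moment_general (n : ℕ) (p : ℝ) (hp : 0 < p) (hp1 : p ≤ 1)
    (d : ℕ) :
    ∑ i ∈ Finset.range (n + 1),
      (n.choose i : ℝ) * p ^ i * (1 - p) ^ (n - i) *
        ((Nat.factorial i : ℝ) / (Nat.factorial (i + d) : ℝ))
      ≤ (Nat.factorial n : ℝ) / ((Nat.factorial (n + d) : ℝ) * p ^ d) := by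
  have hshift : (range (n + 1)).map (addRightEmbedding d) ⊆ range (n + d + 1) := by
    intro j hj
    simp only [mem_map, mem_range, addRightEmbedding_apply] at hj ⊢
    omega
  rw [sum_congr rfl fun i hi => binomial_term_mul_factorial_div_factorial_add hp.ne' d
    (Nat.lt_succ_iff.mp (mem_range.mp hi)), ← mul_sum]
  refine mul_le_of_le_one_right (by positivity) ?_
  simpa using sum_binomial_le_one_of_subset hp.le hp1 hshift

/-- For a binomial random variable `x = B(n, p)` with success probability `p > 0`
and any positive integer `d`, `E[x!/(x+d)!] ≤ n!/((n+d)! p^d)`. -/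
theorem binomial_factorial_ratio_moment (n : ℕ) (p : ℝ) (hp : 0 < p) (hp1 : p ≤ 1)
    (d : ℕ) (hd : 0 < d) :
    ∑ i ∈ Finset.range (n + 1),
      (n.choose i : ℝ) * p ^ i * (1 - p) ^ (n - i) *
        ((Nat.factorial i : ℝ) / (Nat.factorial (i + d) : ℝ))
      ≤ (Nat.factorial n : ℝ) / ((Nat.factorial (n + d) : ℝ) * p ^ d) :=
  binomial_factorial_ratio_moment_general n p hp hp1 d
end

section
/- There exists a constant $C > 0$ such that for all integers $k \geq 1$ and all real numbers $v_1, \ldots, v_k$ with $|v_j| \geq 1$ for every $j$, $\int_{-1}^{1} \prod_{j=1}^{k} |\cos(2\pi \xi v_j)| \, d\xi \leq \frac{C}{\sqrt{k}}$. -/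
/-!
By AM–GM, `∏ⱼ |cos (2π ξ vⱼ)| ≤ (1/k) ∑ⱼ |cos (2π ξ vⱼ)| ^ k`, so it suffices to bound one integral
`∫_{-1}^{1} |cos (c ξ)| ^ k dξ` with `|c| ≥ 2π`. Rescaled, this is `1/|c|` times the integral of the
`π`-periodic function `|cos| ^ k` over a window covering at most `⌈2|c|/π⌉ ≤ |c|` periods, hence at
most the Wallis integral `W k = ∫_0^π sin ^ k`. Finally `W k ^ 2 ≤ W (k-1) * W k = 2π / k`.
-/

open Real MeasureTheory intervalIntegral Finset

theorem Real.prod_le_sum_pow_card_div_card {ι : Type*} {s : Finset ι} (hs : s.Nonempty)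
    {a : ι → ℝ} (ha : ∀ i ∈ s, 0 ≤ a i) :
    ∏ i ∈ s, a i ≤ (∑ i ∈ s, a i ^ #s) / #s := by
  have hn : (#s : ℝ) ≠ 0 := by positivity
  calc ∏ i ∈ s, a i = ∏ i ∈ s, (a i ^ #s) ^ (1 / #s : ℝ) := by
        refine prod_congr rfl fun i hi => ?_
        rw [← rpow_natCast, ← rpow_mul (ha i hi), mul_one_div_cancel hn, rpow_one]
    _ ≤ ∑ i ∈ s, 1 / #s * a i ^ #s :=
        geom_mean_le_arith_mean_weighted s _ _ (fun _ _ => by positivity)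
          (by simp [hn]) fun i hi => pow_nonneg (ha i hi) _
    _ = (∑ i ∈ s, a i ^ #s) / #s := by rw [← mul_sum]; ring

theorem integral_sin_pow_mul_integral_sin_pow_succ (n : ℕ) :
    (∫ x in 0..π, sin x ^ n) * (∫ x in 0..π, sin x ^ (n + 1)) = 2 * π / (n + 1) := by
  induction n with
  | zero => norm_num [mul_comm]
  | succ n ih =>
    rw [integral_sin_pow, mul_comm]
    simp only [sin_zero, sin_pi, zero_pow n.succ_ne_zero, zero_mul, sub_self, zero_div, zero_add,
      mul_assoc, ih]
    push_cast
    field_simp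
    ring

theorem integral_sin_pow_le_sqrt_div {n : ℕ} (hn : n ≠ 0) :
    ∫ x in 0..π, sin x ^ n ≤ √(2 * π) / √n := by
  obtain ⟨m, rfl⟩ := Nat.exists_eq_succ_of_ne_zero hn
  rw [← sqrt_div (by positivity), le_sqrt' (integral_sin_pow_pos _)]
  calc (∫ x in 0..π, sin x ^ (m + 1)) ^ 2
      ≤ (∫ x in 0..π, sin x ^ m) * (∫ x in 0..π, sin x ^ (m + 1)) := by
        rw [sq]
        exact mul_le_mul_of_nonneg_right (integral_sin_pow_succ_le _) (integral_sin_pow_pos _).le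
    _ = 2 * π / (m + 1 : ℕ) := by rw [integral_sin_pow_mul_integral_sin_pow_succ]; push_cast; rfl

theorem Function.Periodic.intervalIntegral_le_natCeil_mul {g : ℝ → ℝ} {T : ℝ}
    (hg : Function.Periodic g T) (hT : 0 < T)
    (h_int : ∀ a b, IntervalIntegrable g volume a b) (hg₀ : ∀ x, 0 ≤ g x)
    (t s : ℝ) {L : ℝ} (hL : 0 ≤ L) :
    ∫ x in t..t + L, g x ≤ ⌈L / T⌉₊ * ∫ x in s..s + T, g x := by
  have hLT : L ≤ ⌈L / T⌉₊ * T := (div_le_iff₀ hT).1 (Nat.le_ceil _)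
  calc ∫ x in t..t + L, g x ≤ ∫ x in t..t + (⌈L / T⌉₊ : ℤ) • T, g x := by
        refine integral_mono_interval le_rfl (by linarith) ?_
          (.of_forall hg₀) (h_int _ _)
        simpa using hLT
    _ = ⌈L / T⌉₊ * ∫ x in s..s + T, g x := by
        rw [hg.intervalIntegral_add_zsmul_eq _ t h_int, hg.intervalIntegral_add_eq t s]
        simp

theorem integral_abs_cos_pow_eq_integral_sin_pow (k : ℕ) :
    ∫ x in -(π / 2)..-(π / 2) + π, |cos x| ^ k = ∫ x in 0..π, sin x ^ k := by
  calc ∫ x in -(π / 2)..-(π / 2) + π, |cos x| ^ k = ∫ x in 0..π, |cos (x - π / 2)| ^ k := by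
        rw [integral_comp_sub_right (fun x => |cos x| ^ k)]; ring_nf
    _ = ∫ x in 0..π, sin x ^ k := integral_congr fun x hx => by
        rw [Set.uIcc_of_le pi_pos.le] at hx
        simp only [cos_sub_pi_div_two, abs_of_nonneg (sin_nonneg_of_mem_Icc hx)]

theorem integral_abs_cos_mul_pow_le {c : ℝ} (hc : 2 * π ≤ |c|) (k : ℕ) :
    ∫ ξ in (-1 : ℝ)..1, |cos (c * ξ)| ^ k ≤ ∫ x in 0..π, sin x ^ k := by
  have hc₀ : 0 < |c| := by linarith [pi_pos]
  have hceil : (⌈2 * |c| / π⌉₊ : ℝ) ≤ |c| := by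
    refine (Nat.ceil_lt_add_one (by positivity)).le.trans ?_
    rw [div_add_one pi_ne_zero, div_le_iff₀ pi_pos]
    nlinarith [pi_gt_three]
  have hperiodic : Function.Periodic (fun x => |cos x| ^ k) π := fun x => by simp
  calc ∫ ξ in (-1 : ℝ)..1, |cos (c * ξ)| ^ k = ∫ ξ in (-1 : ℝ)..1, |cos (|c| * ξ)| ^ k := by
        simp only [← cos_abs (c * _), ← cos_abs (|c| * _), abs_mul, abs_abs]
    _ = |c|⁻¹ * ∫ x in -|c|..-|c| + 2 * |c|, |cos x| ^ k := by
        rw [integral_comp_mul_left (fun x => |cos x| ^ k) hc₀.ne', smul_eq_mul]; ring_nf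
    _ ≤ |c|⁻¹ * (⌈2 * |c| / π⌉₊ * ∫ x in -(π / 2)..-(π / 2) + π, |cos x| ^ k) := by
        gcongr
        exact hperiodic.intervalIntegral_le_natCeil_mul pi_pos
          (fun a b => (by fun_prop : Continuous _).intervalIntegrable a b)
          (fun x => by positivity) _ _ (by positivity)
    _ = ⌈2 * |c| / π⌉₊ / |c| * ∫ x in 0..π, sin x ^ k := by
        rw [integral_abs_cos_pow_eq_integral_sin_pow]; ring
    _ ≤ ∫ x in 0..π, sin x ^ k :=
        mul_le_of_le_one_left (integral_sin_pow_pos _).le ((div_le_one hc₀).2 hceil)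

/-- There is a universal constant `C > 0` such that for all `k ≥ 1` and reals
`v₁, …, v_k` with `|v_j| ≥ 1`,
`∫_{-1}^{1} ∏_j |cos(2π ξ v_j)| dξ ≤ C / √k`. -/
theorem integral_prod_cos_le :
    ∃ C : ℝ, 0 < C ∧ ∀ (k : ℕ), 1 ≤ k → ∀ v : Fin k → ℝ, (∀ j, 1 ≤ |v j|) →
      (∫ ξ in (-1 : ℝ)..1, ∏ j, |Real.cos (2 * π * ξ * v j)|) ≤ C / Real.sqrt k := by
  refine ⟨√(2 * π), by positivity, fun k hk v hv => ?_⟩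
  have hk₀ : k ≠ 0 := by omega
  have h_int : ∀ j, IntervalIntegrable (fun ξ => |cos (2 * π * ξ * v j)| ^ k) volume (-1) 1 :=
    fun j => (by fun_prop : Continuous _).intervalIntegrable _ _
  calc ∫ ξ in (-1 : ℝ)..1, ∏ j, |cos (2 * π * ξ * v j)|
      ≤ ∫ ξ in (-1 : ℝ)..1, (∑ j, |cos (2 * π * ξ * v j)| ^ k) / k := by
        refine integral_mono_on (by norm_num) ((by fun_prop : Continuous _).intervalIntegrable _ _)
          ((by fun_prop : Continuous _).intervalIntegrable _ _) fun ξ _ => ?_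
        simpa using Real.prod_le_sum_pow_card_div_card (univ_nonempty_iff.2 ⟨⟨0, by omega⟩⟩)
          fun j _ => abs_nonneg (cos (2 * π * ξ * v j))
    _ = (∑ j, ∫ ξ in (-1 : ℝ)..1, |cos (2 * π * ξ * v j)| ^ k) / k := by
        rw [intervalIntegral.integral_div, intervalIntegral.integral_finsetSum fun j _ => h_int j]
    _ ≤ (∑ _j : Fin k, ∫ x in 0..π, sin x ^ k) / k := by
        gcongr with j
        have hvj : 2 * π ≤ |2 * π * v j| := by
          rw [abs_mul, abs_of_pos two_pi_pos]
          exact le_mul_of_one_le_right two_pi_pos.le (hv j)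
        simpa only [mul_right_comm] using integral_abs_cos_mul_pow_le hvj k
    _ = ∫ x in 0..π, sin x ^ k := by simp [hk₀]
    _ ≤ √(2 * π) / √k := integral_sin_pow_le_sqrt_div hk₀
end

section
/- Let $\varepsilon_1, \ldots, \varepsilon_n$ be independent Rademacher random variables (uniform on $\{-1,1\}$), and let $v_1, \ldots, v_n$ be nonzero real numbers. Then for every $x_0 \in \mathbb{R}$, $\Pr[|\varepsilon_1 v_1 + \cdots + \varepsilon_n v_n - x_0| \leq 1] \leq C/\sqrt{n}$ for some universal constant $C$. -/
open Finset Real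


lemma cb_sqrt_le (m : ℕ) : (Nat.centralBinom m : ℝ) * Real.sqrt (3 * m + 1) ≤ 4 ^ m := by
  induction m with
  | zero => simp [Nat.centralBinom]
  | succ m ih =>
    have key : ((m:ℝ) + 1) * Nat.centralBinom (m + 1) = 2 * (2 * m + 1) * Nat.centralBinom m := by
      exact_mod_cast congrArg (Nat.cast : ℕ → ℝ) (Nat.succ_mul_centralBinom_succ m)
    have hm1 : (0:ℝ) < (m:ℝ) + 1 := by positivity
    -- suffices: 2*(2m+1)*√(3(m+1)+1) ≤ 4*(m+1)*√(3m+1)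
    have hsq : 2 * (2 * (m:ℝ) + 1) * Real.sqrt (3 * (m+1) + 1)
        ≤ 4 * ((m:ℝ) + 1) * Real.sqrt (3 * m + 1) := by
      have h1 : (0:ℝ) ≤ 2 * (2 * (m:ℝ) + 1) := by positivity
      have h2 : (0:ℝ) ≤ 4 * ((m:ℝ) + 1) := by positivity
      have e1 : 2 * (2 * (m:ℝ) + 1) * Real.sqrt (3 * (m+1) + 1)
          = Real.sqrt ((2 * (2 * (m:ℝ) + 1))^2 * (3 * (m+1) + 1)) := by
        rw [Real.sqrt_mul (by positivity), Real.sqrt_sq h1]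
      have e2 : 4 * ((m:ℝ) + 1) * Real.sqrt (3 * m + 1)
          = Real.sqrt ((4 * ((m:ℝ) + 1))^2 * (3 * m + 1)) := by
        rw [Real.sqrt_mul (by positivity), Real.sqrt_sq h2]
      rw [e1, e2]
      apply Real.sqrt_le_sqrt
      nlinarith [sq_nonneg ((m:ℝ))]
    have hcb : (Nat.centralBinom (m+1) : ℝ)
        = 2 * (2 * m + 1) * Nat.centralBinom m / ((m:ℝ) + 1) := by
      field_simp
      linarith [key]
    push_cast
    rw [hcb]
    rw [div_mul_eq_mul_div, div_le_iff₀ hm1]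
    have hs : (0:ℝ) ≤ Real.sqrt (3 * ((m:ℝ)+1) + 1) := Real.sqrt_nonneg _
    calc 2 * (2 * (m:ℝ) + 1) * Nat.centralBinom m * Real.sqrt (3 * ((m:ℝ) + 1) + 1)
        = (Nat.centralBinom m : ℝ) * (2 * (2 * (m:ℝ) + 1) * Real.sqrt (3 * (m+1) + 1)) := by
          push_cast; ring
      _ ≤ (Nat.centralBinom m : ℝ) * (4 * ((m:ℝ) + 1) * Real.sqrt (3 * m + 1)) := by
          apply mul_le_mul_of_nonneg_left _ (by positivity)
          exact_mod_cast hsq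
      _ = ((Nat.centralBinom m : ℝ) * Real.sqrt (3 * m + 1)) * (4 * ((m:ℝ)+1)) := by ring
      _ ≤ 4 ^ m * (4 * ((m:ℝ)+1)) := by
          apply mul_le_mul_of_nonneg_right ih (by positivity)
      _ = 4 ^ (m + 1) * ((m:ℝ) + 1) := by ring

lemma half_choose_sqrt_le (n : ℕ) : (Nat.choose n (n / 2) : ℝ) * Real.sqrt n ≤ 2 ^ n := by
  rcases Nat.even_or_odd n with ⟨m, hm⟩ | ⟨m, hm⟩
  · subst hm
    have h1 : (m + m) / 2 = m := by omega
    rw [h1]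
    have h2 : Nat.choose (m + m) m = Nat.centralBinom m := by
      rw [Nat.centralBinom]; congr 1; omega
    rw [h2]
    calc (Nat.centralBinom m : ℝ) * Real.sqrt ((m + m : ℕ) : ℝ)
        = (Nat.centralBinom m : ℝ) * Real.sqrt ((m:ℝ) + m) := by push_cast; ring_nf
      _
        ≤ (Nat.centralBinom m : ℝ) * Real.sqrt (3 * m + 1) := by
          apply mul_le_mul_of_nonneg_left _ (by positivity)
          apply Real.sqrt_le_sqrt; push_cast; linarith
      _ ≤ 4 ^ m := cb_sqrt_le m
      _ ≤ 2 ^ (m + m) := by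
          rw [show (4:ℝ) = 2^2 by norm_num, ← pow_mul]
          apply pow_le_pow_right₀ (by norm_num); omega
  · subst hm
    have h1 : (2 * m + 1) / 2 = m := by omega
    rw [h1]
    have h2 : 2 * Nat.choose (2 * m + 1) m = Nat.centralBinom (m + 1) := by
      rw [Nat.centralBinom]
      have : 2 * (m + 1) = (2 * m + 1) + 1 := by ring
      rw [this, Nat.choose_succ_succ]
      have : Nat.choose (2 * m + 1) (m + 1) = Nat.choose (2 * m + 1) m := by
        rw [← Nat.choose_symm (by omega)]
        congr 1; omega
      rw [this]; ring
    have h3 : (Nat.choose (2 * m + 1) m : ℝ) = (Nat.centralBinom (m+1) : ℝ) / 2 := by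
      rw [eq_div_iff (by norm_num : (2:ℝ) ≠ 0)]
      exact_mod_cast (mul_comm 2 (Nat.choose (2*m+1) m) ▸ h2)
    rw [h3]
    have h4 := cb_sqrt_le (m + 1)
    have h5 : Real.sqrt ((2 * m + 1 : ℕ) : ℝ) ≤ Real.sqrt (3 * ((m:ℝ)+1) + 1) := by
      apply Real.sqrt_le_sqrt; push_cast; linarith
    calc (Nat.centralBinom (m+1) : ℝ) / 2 * Real.sqrt ((2 * m + 1 : ℕ) : ℝ)
        ≤ (Nat.centralBinom (m+1) : ℝ) / 2 * Real.sqrt (3 * ((m:ℝ)+1) + 1) := by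
          apply mul_le_mul_of_nonneg_left h5 (by positivity)
      _ ≤ 4 ^ (m+1) / 2 := by
          rw [div_mul_eq_mul_div]
          apply div_le_div_of_nonneg_right _ (by norm_num)
          · exact_mod_cast h4
      _ = 2 ^ (2 * m + 1) := by
          rw [show (4:ℝ) = 2^2 by norm_num, ← pow_mul]
          rw [show 2 * (m + 1) = (2 * m + 1) + 1 by ring, pow_succ]
          ring

lemma lo_core (n : ℕ) (w : Fin n → ℝ) (hw : ∀ i, 1 ≤ w i) (x₀ : ℝ) :
    ((Finset.univ.filter fun s : Fin n → Bool =>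
        |∑ i, (if s i then (1 : ℝ) else -1) * w i - x₀| ≤ 1).card : ℕ)
      ≤ 2 * Nat.choose n (n / 2) := by
  classical
  set S : Finset (Fin n) → ℝ := fun A => ∑ i ∈ A, w i - ∑ i ∈ Aᶜ, w i with hS
  set e : (Fin n → Bool) → Finset (Fin n) := fun s => univ.filter (fun i => s i) with he
  have hsum : ∀ s : Fin n → Bool, ∑ i, (if s i then (1 : ℝ) else -1) * w i = S (e s) := by
    intro s
    rw [← Finset.sum_filter_add_sum_filter_not univ (fun i => s i)]
    have h1 : ∑ i ∈ univ.filter (fun i => s i), (if s i then (1:ℝ) else -1) * w i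
        = ∑ i ∈ e s, w i := by
      apply Finset.sum_congr rfl
      intro i hi
      simp only [Finset.mem_filter] at hi
      simp [hi.2]
    have h2 : ∑ i ∈ univ.filter (fun i => ¬ s i), (if s i then (1:ℝ) else -1) * w i
        = - ∑ i ∈ (e s)ᶜ, w i := by
      rw [← Finset.sum_neg_distrib]
      have : (e s)ᶜ = univ.filter (fun i => ¬ s i) := by
        ext i; simp [he]
      rw [this]
      apply Finset.sum_congr rfl
      intro i hi
      simp only [Finset.mem_filter] at hi
      simp [hi.2]
    rw [h1, h2, hS]; ring
  have hinj : Function.Injective e := by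
    intro s t hst
    funext i
    have h2 : (i ∈ e s) = (i ∈ e t) := by rw [hst]
    simp only [he, Finset.mem_filter, Finset.mem_univ, true_and] at h2
    cases hsi : s i <;> cases hti : t i <;> simp_all
  have hchain : ∀ A B : Finset (Fin n), A ⊆ B → A ≠ B → S A + 2 ≤ S B := by
    intro A B hAB hne
    have h1 : ∑ i ∈ B \ A, w i + ∑ i ∈ A, w i = ∑ i ∈ B, w i := Finset.sum_sdiff hAB
    have h2 : Bᶜ ⊆ Aᶜ := Finset.compl_subset_compl.mpr hAB
    have h3 : ∑ i ∈ Aᶜ \ Bᶜ, w i + ∑ i ∈ Bᶜ, w i = ∑ i ∈ Aᶜ, w i := Finset.sum_sdiff h2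
    have h4 : Aᶜ \ Bᶜ = B \ A := by
      ext i; simp only [Finset.mem_sdiff, Finset.mem_compl]; tauto
    have h5 : ((B \ A).card : ℝ) * 1 ≤ ∑ i ∈ B \ A, w i := by
      have := Finset.card_nsmul_le_sum (B \ A) w 1 (fun i _ => hw i)
      simpa [nsmul_eq_mul] using this
    have h6 : (B \ A).Nonempty := by
      rw [Finset.sdiff_nonempty]
      intro hBA
      exact hne (Finset.Subset.antisymm hAB hBA)
    have h7 : (1 : ℝ) ≤ ((B \ A).card : ℝ) := by
      exact_mod_cast Finset.card_pos.mpr h6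
    rw [h4] at h3
    simp only [hS]
    linarith
  set 𝒜 : Finset (Finset (Fin n)) :=
    (Finset.univ.filter fun s : Fin n → Bool =>
        |∑ i, (if s i then (1 : ℝ) else -1) * w i - x₀| ≤ 1).image e with h𝒜
  have hcard : (Finset.univ.filter fun s : Fin n → Bool =>
        |∑ i, (if s i then (1 : ℝ) else -1) * w i - x₀| ≤ 1).card = 𝒜.card :=
    (Finset.card_image_of_injective _ hinj).symm
  have hmem : ∀ A ∈ 𝒜, |S A - x₀| ≤ 1 := by
    intro A hA
    rw [h𝒜, Finset.mem_image] at hA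
    obtain ⟨s, hs, rfl⟩ := hA
    rw [Finset.mem_filter] at hs
    rw [← hsum]; exact hs.2
  rw [hcard]
  have hsplit : (𝒜.filter fun A => S A < x₀ + 1).card
      + (𝒜.filter fun A => ¬ S A < x₀ + 1).card = 𝒜.card :=
    Finset.card_filter_add_card_filter_not (fun A => S A < x₀ + 1)
  have hf1 : (𝒜.filter fun A => S A < x₀ + 1).card ≤ Nat.choose n (n / 2) := by
    have hanti : IsAntichain (· ⊆ ·) ((𝒜.filter fun A => S A < x₀ + 1) : Set (Finset (Fin n))) := by
      intro A hA B hB hne hsub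
      simp only [Finset.coe_filter, Set.mem_setOf_eq] at hA hB
      have hSA := abs_le.mp (hmem A hA.1)
      have := hchain A B hsub hne
      linarith [hB.2]
    simpa using IsAntichain.sperner hanti
  have hf2 : (𝒜.filter fun A => ¬ S A < x₀ + 1).card ≤ Nat.choose n (n / 2) := by
    have hanti : IsAntichain (· ⊆ ·)
        ((𝒜.filter fun A => ¬ S A < x₀ + 1) : Set (Finset (Fin n))) := by
      intro A hA B hB hne hsub
      simp only [Finset.coe_filter, Set.mem_setOf_eq] at hA hB
      have hSA := abs_le.mp (hmem A hA.1)
      have hSB := abs_le.mp (hmem B hB.1)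
      have := hchain A B hsub hne
      have e1 : S A = x₀ + 1 := le_antisymm (by linarith [hSA.2]) (by linarith [hA.2])
      have e2 : S B = x₀ + 1 := le_antisymm (by linarith [hSB.2]) (by linarith [hB.2])
      linarith
    simpa using IsAntichain.sperner hanti
  linarith [hsplit, hf1, hf2]

lemma lo_flip (n : ℕ) (v : Fin n → ℝ) (x₀ : ℝ) :
    (Finset.univ.filter fun s : Fin n → Bool =>
        |∑ i, (if s i then (1 : ℝ) else -1) * v i - x₀| ≤ 1).card
      = (Finset.univ.filter fun s : Fin n → Bool =>
        |∑ i, (if s i then (1 : ℝ) else -1) * |v i| - x₀| ≤ 1).card := by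
  classical
  set τ : (Fin n → Bool) → (Fin n → Bool) := fun s i => if 0 ≤ v i then s i else !(s i) with hτ
  have hsum : ∀ s : Fin n → Bool,
      ∑ i, (if τ s i then (1:ℝ) else -1) * |v i| = ∑ i, (if s i then (1:ℝ) else -1) * v i := by
    intro s
    apply Finset.sum_congr rfl
    intro i _
    by_cases h : 0 ≤ v i
    · simp [hτ, h, abs_of_nonneg h]
    · push_neg at h
      simp only [hτ, if_neg (not_le.mpr h), abs_of_neg h]
      cases s i <;> simp <;> ring
  have hττ : ∀ s, τ (τ s) = s := by
    intro s; funext i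
    by_cases h : 0 ≤ v i <;> simp [hτ, h]
  apply Finset.card_bij' (fun s _ => τ s) (fun s _ => τ s)
  · intro s hs
    simp only [Finset.mem_filter, Finset.mem_univ, true_and] at hs ⊢
    rw [hsum]; exact hs
  · intro s hs
    simp only [Finset.mem_filter, Finset.mem_univ, true_and] at hs ⊢
    have h := hsum (τ s)
    rw [hττ] at h
    rw [← h]; exact hs
  · intro s _; exact hττ s
  · intro s _; exact hττ s

/-- The Littlewood–Offord theorem for independent Rademacher signs: there is a
universal constant `C > 0` such that for every `n ≥ 1`, reals `v_i` with
`|v_i| ≥ 1`, and every `x₀`, the probability (over a uniformly random sign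
pattern `s : Fin n → Bool`) that `|∑ εᵢ vᵢ - x₀| ≤ 1` is at most `C/√n`. -/
theorem littlewood_offord_independent :
    ∃ C : ℝ, 0 < C ∧ ∀ (n : ℕ), 1 ≤ n → ∀ v : Fin n → ℝ, (∀ i, 1 ≤ |v i|) → ∀ x₀ : ℝ,
      ((Finset.univ.filter fun s : Fin n → Bool =>
          |∑ i, (if s i then (1 : ℝ) else -1) * v i - x₀| ≤ 1).card : ℝ) / 2 ^ n
        ≤ C / Real.sqrt n := by
  refine ⟨2, by norm_num, fun n hn v hv x₀ => ?_⟩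
  have hsn : 0 < Real.sqrt n := Real.sqrt_pos.mpr (by exact_mod_cast hn)
  rw [lo_flip n v x₀]
  have hcore := lo_core n (fun i => |v i|) hv x₀
  have h1 : ((Finset.univ.filter fun s : Fin n → Bool =>
      |∑ i, (if s i then (1 : ℝ) else -1) * |v i| - x₀| ≤ 1).card : ℝ)
      ≤ 2 * Nat.choose n (n / 2) := by exact_mod_cast hcore
  have h2 := half_choose_sqrt_le n
  rw [div_le_div_iff₀ (by positivity) hsn]
  calc ((Finset.univ.filter fun s : Fin n → Bool =>
        |∑ i, (if s i then (1 : ℝ) else -1) * |v i| - x₀| ≤ 1).card : ℝ) * Real.sqrt n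
      ≤ 2 * Nat.choose n (n / 2) * Real.sqrt n := by
        apply mul_le_mul_of_nonneg_right h1 (Real.sqrt_nonneg _)
    _ = 2 * ((Nat.choose n (n / 2) : ℝ) * Real.sqrt n) := by ring
    _ ≤ 2 * 2 ^ n := by linarith
end
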